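/- Let A and B be Hermitian n×n complex matrices with ‖B‖ ≤ 1, and let ε > 0. Then C_ε(A) ≤ C_ε(B·A·B). -/

import Mathlib

open Matrix

/-- Number of eigenvalues (with multiplicity) of a Hermitian matrix in the open
interval `(a, b)`. -/
noncomputable def eigCountIoo {n : Type*} [Fintype n] [DecidableEq n]
    (M : Matrix n n ℂ) (a b : ℝ) : ℕ :=
  if hM : M.IsHermitian then Nat.card {i : n // hM.eigenvalues i ∈ Set.Ioo a b} else 0

/-- The operator (spectral) norm of a matrix, i.e. the norm of the induced operator
between Euclidean spaces. -/
noncomputable def matNorm {m n : Type*} [Fintype m] [Fintype n] [DecidableEq n]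
    (M : Matrix m n ℂ) : ℝ :=
  ‖LinearMap.toContinuousLinearMap (Matrix.toEuclideanLin M)‖

/-!
Let `V` be the span of the eigenvectors of `B * A * B` with eigenvalues outside `(-ε, ε)` and
`W` the span of the eigenvectors of `A` with eigenvalues inside it. If `x ∈ V` and `B x ∈ W` with
`B x ≠ 0`, then `ε ‖x‖ ≤ ‖B A B x‖ ≤ ‖A B x‖ < ε ‖B x‖ ≤ ε ‖x‖`, which is absurd; and `B x = 0`
forces `B A B x = 0`, hence `x = 0`. So `x ↦ B x mod W` is injective on `V`, and
`n - C_ε(B A B) = dim V ≤ dim (ℂⁿ ⧸ W) = n - C_ε(A)`.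
-/

open Module

theorem Submodule.finrank_add_finrank_le_of_disjoint_comap {K V W : Type*} [DivisionRing K]
    [AddCommGroup V] [Module K V] [AddCommGroup W] [Module K W] [FiniteDimensional K W]
    (f : V →ₗ[K] W) {p : Submodule K V} {q : Submodule K W} (h : Disjoint p (q.comap f)) :
    finrank K p + finrank K q ≤ finrank K W := by
  have hinj : Function.Injective (q.mkQ ∘ₗ f ∘ₗ p.subtype) := by
    rwa [← LinearMap.ker_eq_bot, LinearMap.ker_comp, Submodule.ker_mkQ, Submodule.comap_comp,
      ← Submodule.disjoint_iff_comap_eq_bot]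
  have := LinearMap.finrank_le_finrank_of_injective hinj
  have := q.finrank_quotient_add_finrank
  omega

theorem OrthonormalBasis.norm_sq_eq_sum_norm_sq_repr {ι 𝕜 E : Type*} [Fintype ι] [RCLike 𝕜]
    [NormedAddCommGroup E] [InnerProductSpace 𝕜 E] (b : OrthonormalBasis ι 𝕜 E) (x : E) :
    ‖x‖ ^ 2 = ∑ i, ‖b.repr x i‖ ^ 2 := by
  simp [← b.sum_sq_norm_inner_right x, b.repr_apply_apply]

namespace Matrix

variable {𝕜 : Type*} [RCLike 𝕜] {n : Type*} [Fintype n] [DecidableEq n]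

noncomputable def IsHermitian.spectralSubspace {A : Matrix n n 𝕜} (hA : A.IsHermitian)
    (s : Set ℝ) : Submodule 𝕜 (EuclideanSpace 𝕜 n) :=
  Submodule.span 𝕜 (hA.eigenvectorBasis '' {i | hA.eigenvalues i ∈ s})

namespace IsHermitian

variable {A : Matrix n n 𝕜} (hA : A.IsHermitian)

theorem mem_spectralSubspace {s : Set ℝ} {x : EuclideanSpace 𝕜 n} :
    x ∈ hA.spectralSubspace s ↔
      ∀ i, hA.eigenvalues i ∉ s → hA.eigenvectorBasis.repr x i = 0 := by
  rw [spectralSubspace, ← hA.eigenvectorBasis.coe_toBasis, Basis.mem_span_image]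
  simp [Set.subset_def, not_imp_comm]

theorem finrank_spectralSubspace (s : Set ℝ) :
    finrank 𝕜 (hA.spectralSubspace s) = Nat.card {i // hA.eigenvalues i ∈ s} := by
  classical
  rw [spectralSubspace, Nat.card_eq_fintype_card, ← finrank_span_eq_card
    (hA.eigenvectorBasis.orthonormal.linearIndependent.comp _ Subtype.val_injective),
    Set.range_comp, Subtype.range_coe_subtype]

theorem finrank_spectralSubspace_compl_add (s : Set ℝ) :
    finrank 𝕜 (hA.spectralSubspace sᶜ) + finrank 𝕜 (hA.spectralSubspace s) =
      Fintype.card n := by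
  classical
  simp only [finrank_spectralSubspace, Nat.card_eq_fintype_card, Set.mem_compl_iff]
  have := Fintype.card_subtype_compl (hA.eigenvalues · ∈ s)
  have := Fintype.card_subtype_le (hA.eigenvalues · ∈ s)
  omega

theorem repr_toEuclideanLin (x : EuclideanSpace 𝕜 n) (i : n) :
    hA.eigenvectorBasis.repr (toEuclideanLin A x) i =
      hA.eigenvalues i * hA.eigenvectorBasis.repr x i := by
  simp only [eigenvectorBasis, eigenvalues, eigenvalues₀, OrthonormalBasis.repr_reindex]
  exact LinearMap.IsSymmetric.eigenvectorBasis_apply_self_apply _ _ _ _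

theorem norm_toEuclideanLin_sq (x : EuclideanSpace 𝕜 n) :
    ‖toEuclideanLin A x‖ ^ 2 =
      ∑ i, hA.eigenvalues i ^ 2 * ‖hA.eigenvectorBasis.repr x i‖ ^ 2 := by
  simp [hA.eigenvectorBasis.norm_sq_eq_sum_norm_sq_repr, repr_toEuclideanLin, mul_pow]

theorem mul_norm_le_norm_toEuclideanLin {ε : ℝ} {x : EuclideanSpace 𝕜 n}
    (hx : x ∈ hA.spectralSubspace (Set.Ioo (-ε) ε)ᶜ) : ε * ‖x‖ ≤ ‖toEuclideanLin A x‖ := by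
  obtain hε | hε := le_or_gt ε 0
  · exact (mul_nonpos_of_nonpos_of_nonneg hε (norm_nonneg x)).trans (norm_nonneg _)
  refine (pow_le_pow_iff_left₀ (by positivity) (norm_nonneg _) two_ne_zero).mp ?_
  rw [mul_pow, hA.norm_toEuclideanLin_sq, hA.eigenvectorBasis.norm_sq_eq_sum_norm_sq_repr,
    Finset.mul_sum]
  refine Finset.sum_le_sum fun i _ => ?_
  by_cases hi : hA.eigenvalues i ∈ Set.Ioo (-ε) ε
  · simp [hA.mem_spectralSubspace.mp hx i (by simpa using hi)]
  · rw [Set.mem_Ioo, ← abs_lt, not_lt] at hi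
    exact mul_le_mul_of_nonneg_right (sq_le_sq.mpr (by rwa [abs_of_pos hε])) (by positivity)

theorem norm_toEuclideanLin_lt_mul_norm {ε : ℝ} {x : EuclideanSpace 𝕜 n}
    (hx : x ∈ hA.spectralSubspace (Set.Ioo (-ε) ε)) (hx0 : x ≠ 0) :
    ‖toEuclideanLin A x‖ < ε * ‖x‖ := by
  obtain ⟨i, hi⟩ : ∃ i, hA.eigenvectorBasis.repr x i ≠ 0 := by
    by_contra! h
    exact hx0 (hA.eigenvectorBasis.repr.injective (by ext i; simp [h i]))
  have hεi : hA.eigenvalues i ∈ Set.Ioo (-ε) ε := by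
    by_contra h
    exact hi (hA.mem_spectralSubspace.mp hx i h)
  have hε : 0 < ε := by linarith [hεi.1, hεi.2]
  refine lt_of_pow_lt_pow_left₀ 2 (by positivity) ?_
  rw [mul_pow, hA.norm_toEuclideanLin_sq, hA.eigenvectorBasis.norm_sq_eq_sum_norm_sq_repr,
    Finset.mul_sum]
  refine Finset.sum_lt_sum (fun j _ => ?_) ⟨i, Finset.mem_univ i, ?_⟩
  · by_cases hj : hA.eigenvalues j ∈ Set.Ioo (-ε) ε
    · exact mul_le_mul_of_nonneg_right (sq_lt_sq' hj.1 hj.2).le (by positivity)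
    · simp [hA.mem_spectralSubspace.mp hx j hj]
  · exact mul_lt_mul_of_pos_right (sq_lt_sq' hεi.1 hεi.2) (pow_pos (norm_pos_iff.mpr hi) 2)

end IsHermitian

theorem disjoint_spectralSubspace_compl_comap_spectralSubspace {A B : Matrix n n 𝕜}
    (hA : A.IsHermitian) (hBAB : (B * A * B).IsHermitian)
    (hB : ∀ v, ‖toEuclideanLin B v‖ ≤ ‖v‖) {ε : ℝ} (hε : 0 < ε) :
    Disjoint (hBAB.spectralSubspace (Set.Ioo (-ε) ε)ᶜ)
      ((hA.spectralSubspace (Set.Ioo (-ε) ε)).comap (toEuclideanLin B)) := by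
  rw [Submodule.disjoint_def]
  intro x hx hBx
  have hBAB_apply : toEuclideanLin (B * A * B) x =
      toEuclideanLin B (toEuclideanLin A (toEuclideanLin B x)) := by simp
  have hlow := hBAB.mul_norm_le_norm_toEuclideanLin hx
  rw [hBAB_apply] at hlow
  have hBx0 : toEuclideanLin B x = 0 := by
    by_contra hne
    refine lt_irrefl (ε * ‖x‖) ?_
    calc ε * ‖x‖ ≤ ‖toEuclideanLin B (toEuclideanLin A (toEuclideanLin B x))‖ := hlow
      _ ≤ ‖toEuclideanLin A (toEuclideanLin B x)‖ := hB _
      _ < ε * ‖toEuclideanLin B x‖ := hA.norm_toEuclideanLin_lt_mul_norm hBx hne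
      _ ≤ ε * ‖x‖ := by gcongr; exact hB x
  rw [hBx0, map_zero, map_zero, norm_zero] at hlow
  exact norm_le_zero_iff.mp (le_of_mul_le_mul_left (by rwa [mul_zero]) hε)

end Matrix

theorem eigCountIoo_eq_finrank {n : Type*} [Fintype n] [DecidableEq n] {M : Matrix n n ℂ}
    (hM : M.IsHermitian) (a b : ℝ) :
    eigCountIoo M a b = finrank ℂ (hM.spectralSubspace (Set.Ioo a b)) := by
  rw [eigCountIoo, dif_pos hM, hM.finrank_spectralSubspace]

theorem norm_toEuclideanLin_le_matNorm_mul {m n : Type*} [Fintype m] [Fintype n]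
    [DecidableEq n] (M : Matrix m n ℂ) (v : EuclideanSpace ℂ n) :
    ‖toEuclideanLin M v‖ ≤ matNorm M * ‖v‖ :=
  (LinearMap.toContinuousLinearMap (toEuclideanLin M)).le_opNorm v

theorem stmt10 {n : ℕ} (A B : Matrix (Fin n) (Fin n) ℂ)
    (hA : A.IsHermitian) (hB : B.IsHermitian) (hBn : matNorm B ≤ 1)
    (ε : ℝ) (hε : 0 < ε) :
    eigCountIoo A (-ε) ε ≤ eigCountIoo (B * A * B) (-ε) ε := by
  have hBAB : (B * A * B).IsHermitian := by
    simpa [hB.eq] using isHermitian_conjTranspose_mul_mul B hA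
  have hB_contracts (v : EuclideanSpace ℂ (Fin n)) : ‖toEuclideanLin B v‖ ≤ ‖v‖ :=
    (norm_toEuclideanLin_le_matNorm_mul B v).trans (mul_le_of_le_one_left (norm_nonneg v) hBn)
  have hdim := Submodule.finrank_add_finrank_le_of_disjoint_comap _
    (disjoint_spectralSubspace_compl_comap_spectralSubspace hA hBAB hB_contracts hε)
  have hsplit := hBAB.finrank_spectralSubspace_compl_add (Set.Ioo (-ε) ε)
  rw [finrank_euclideanSpace] at hdim
  rw [eigCountIoo_eq_finrank hA, eigCountIoo_eq_finrank hBAB]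
  omega
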